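/- arXiv:2106.14431 — 9 statements merged into one kernel-verified Lean document; each statement's English description precedes it below -/
import Mathlib

section
/- For any vectors a, b, c, d, x, y in R^m and thresholds θ_x, θ_y ≥ 0, it is impossible that simultaneously: d((a+b)/2, x) ≤ θ_x, d((c+d)/2, x) ≤ θ_x, d((a+c)/2, x) > θ_x, d((b+d)/2, x) > θ_x, d((a+c)/2, y) ≤ θ_y, d((b+d)/2, y) ≤ θ_y, d((a+b)/2, y) > θ_y, and d((c+d)/2, y) > θ_y, where d is Euclidean distance. -/
/-!
The four midpoints `(a+b)/2, (c+d)/2` and `(a+c)/2, (b+d)/2` form two pairs with a common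
midpoint `(a+b+c+d)/4`. By Apollonius's theorem, for two pairs `p, q` and `r, s` with a common
midpoint, `d(z,p)² + d(z,q)² - d(z,r)² - d(z,s)²` does not depend on `z`. At `z = x` this
quantity is negative (`p, q` lie in the ball around `x`, `r, s` do not), while at `z = y` it is
positive, a contradiction.
-/

open EuclideanGeometry

section

variable {V P : Type*} [NormedAddCommGroup V] [InnerProductSpace ℝ V] [MetricSpace P]
  [NormedAddTorsor V P]

theorem dist_sq_add_dist_sq_sub_eq_of_midpoint_eq {p q r s : P}
    (h : midpoint ℝ p q = midpoint ℝ r s) (z : P) :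
    dist z p ^ 2 + dist z q ^ 2 - (dist z r ^ 2 + dist z s ^ 2) =
      (dist p q ^ 2 - dist r s ^ 2) / 2 := by
  rw [dist_sq_add_dist_sq_eq_two_mul_dist_midpoint_sq_add_half_dist_sq,
    dist_sq_add_dist_sq_eq_two_mul_dist_midpoint_sq_add_half_dist_sq, h]
  ring

theorem midpoint_ne_midpoint_of_balls_separate {p q r s x y : P} {θx θy : ℝ}
    (hpx : dist p x ≤ θx) (hqx : dist q x ≤ θx) (hrx : θx < dist r x) (hsx : θx < dist s x)
    (hry : dist r y ≤ θy) (hsy : dist s y ≤ θy) (hpy : θy < dist p y) (hqy : θy < dist q y) :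
    midpoint ℝ p q ≠ midpoint ℝ r s := by
  intro h
  have hθx : 0 ≤ θx := dist_nonneg.trans hpx
  have hθy : 0 ≤ θy := dist_nonneg.trans hry
  have at_x := dist_sq_add_dist_sq_sub_eq_of_midpoint_eq h x
  have at_y := dist_sq_add_dist_sq_sub_eq_of_midpoint_eq h y
  simp only [dist_comm x, dist_comm y] at at_x at_y
  have := pow_le_pow_left₀ dist_nonneg hpx 2
  have := pow_le_pow_left₀ dist_nonneg hqx 2
  have := pow_lt_pow_left₀ hrx hθx two_ne_zero
  have := pow_lt_pow_left₀ hsx hθx two_ne_zero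
  have := pow_le_pow_left₀ dist_nonneg hry 2
  have := pow_le_pow_left₀ dist_nonneg hsy 2
  have := pow_lt_pow_left₀ hpy hθy two_ne_zero
  have := pow_lt_pow_left₀ hqy hθy two_ne_zero
  linarith

end

theorem stmt_1_general (m : ℕ) (a b c d x y : EuclideanSpace ℝ (Fin m))
    (θx θy : ℝ) :
    ¬ (dist (((1:ℝ)/2) • (a + b)) x ≤ θx ∧
       dist (((1:ℝ)/2) • (c + d)) x ≤ θx ∧
       θx < dist (((1:ℝ)/2) • (a + c)) x ∧
       θx < dist (((1:ℝ)/2) • (b + d)) x ∧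
       dist (((1:ℝ)/2) • (a + c)) y ≤ θy ∧
       dist (((1:ℝ)/2) • (b + d)) y ≤ θy ∧
       θy < dist (((1:ℝ)/2) • (a + b)) y ∧
       θy < dist (((1:ℝ)/2) • (c + d)) y) := by
  rintro ⟨hpx, hqx, hrx, hsx, hry, hsy, hpy, hqy⟩
  refine midpoint_ne_midpoint_of_balls_separate hpx hqx hrx hsx hry hsy hpy hqy ?_
  simp only [midpoint_eq_smul_add]
  module

/-- The averaging + distance-based labelling embedding strategy cannot simulate
`K = {a∧b→x, c∧d→x, a∧c→y, b∧d→y}`. -/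
theorem stmt_1 (m : ℕ) (a b c d x y : EuclideanSpace ℝ (Fin m))
    (θx θy : ℝ) (hθx : 0 ≤ θx) (hθy : 0 ≤ θy) :
    ¬ (dist (((1:ℝ)/2) • (a + b)) x ≤ θx ∧
       dist (((1:ℝ)/2) • (c + d)) x ≤ θx ∧
       θx < dist (((1:ℝ)/2) • (a + c)) x ∧
       θx < dist (((1:ℝ)/2) • (b + d)) x ∧
       dist (((1:ℝ)/2) • (a + c)) y ≤ θy ∧
       dist (((1:ℝ)/2) • (b + d)) y ≤ θy ∧
       θy < dist (((1:ℝ)/2) • (a + b)) y ∧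
       θy < dist (((1:ℝ)/2) • (c + d)) y) :=
  stmt_1_general m a b c d x y θx θy
end

section
/- There do not exist nonzero vectors a, b, c, d, x, y in R^m and thresholds λ_x > 0, λ_y > 0 such that, writing n(u,v) = (u+v)/‖u+v‖ (assuming all pairwise sums among {a,b,c,d} are nonzero), the following all hold: n(a,b)·x ≥ λ_x, n(c,d)·x ≥ λ_x, n(a,c)·x < λ_x, n(b,d)·x < λ_x, n(a,d)·x < λ_x, n(b,c)·x < λ_x, and n(a,c)·y ≥ λ_y, n(b,d)·y ≥ λ_y, n(a,d)·y ≥ λ_y, n(b,c)·y ≥ λ_y, n(a,b)·y < λ_y, n(c,d)·y < λ_y. -/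
/-!
The two label patterns split the same vector `a + b + c + d` in two ways:
`(a + b) + (c + d) = (a + c) + (b + d)`. Multiplying the threshold conditions by the norms of
the unnormalised sums and adding them, the `x`-labels force
`‖a + b‖ + ‖c + d‖ < ‖a + c‖ + ‖b + d‖`, while the `y`-labels force the reverse inequality.
-/

/-- Normalised sum of two vectors. -/
noncomputable def nsum {m : ℕ} (u v : EuclideanSpace ℝ (Fin m)) :
    EuclideanSpace ℝ (Fin m) := ‖u + v‖⁻¹ • (u + v)

open RealInnerProductSpace

section ThresholdSplit

variable {E : Type*} [NormedAddCommGroup E] [InnerProductSpace ℝ E]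

theorem norm_add_norm_lt_of_add_eq {p q r s w : E} {l : ℝ} (hl : 0 < l)
    (hsplit : p + q = r + s) (hp : l * ‖p‖ ≤ ⟪p, w⟫) (hq : l * ‖q‖ ≤ ⟪q, w⟫)
    (hr : ⟪r, w⟫ < l * ‖r‖) (hs : ⟪s, w⟫ < l * ‖s‖) :
    ‖p‖ + ‖q‖ < ‖r‖ + ‖s‖ := by
  have hinner : ⟪p, w⟫ + ⟪q, w⟫ = ⟪r, w⟫ + ⟪s, w⟫ := by
    rw [← inner_add_left, hsplit, inner_add_left]
  exact lt_of_mul_lt_mul_left (by linarith) hl.le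

end ThresholdSplit

section NormalisedSum

variable {m : ℕ} {u v w : EuclideanSpace ℝ (Fin m)} {l : ℝ}

theorem inner_nsum_mul_norm (u v w : EuclideanSpace ℝ (Fin m)) :
    ⟪nsum u v, w⟫ * ‖u + v‖ = ⟪u + v, w⟫ := by
  rcases eq_or_ne (u + v) 0 with huv | huv
  · simp [nsum, huv]
  · rw [nsum, real_inner_smul_left]
    field_simp

theorem mul_norm_le_inner_of_le_inner_nsum (h : l ≤ ⟪nsum u v, w⟫) :
    l * ‖u + v‖ ≤ ⟪u + v, w⟫ :=
  inner_nsum_mul_norm u v w ▸ mul_le_mul_of_nonneg_right h (norm_nonneg _)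

theorem inner_lt_mul_norm_of_inner_nsum_lt (huv : u + v ≠ 0) (h : ⟪nsum u v, w⟫ < l) :
    ⟪u + v, w⟫ < l * ‖u + v‖ :=
  inner_nsum_mul_norm u v w ▸ mul_lt_mul_of_pos_right h (norm_pos_iff.mpr huv)

/-- `nsum u v = 0` when `u + v = 0`, so a positive threshold can only be met by a nonzero sum. -/
theorem add_ne_zero_of_le_inner_nsum (hl : 0 < l) (h : l ≤ ⟪nsum u v, w⟫) : u + v ≠ 0 := by
  rintro huv
  simp [nsum, huv] at h
  linarith

end NormalisedSum

theorem stmt_4_general (m : ℕ) (a b c d x y : EuclideanSpace ℝ (Fin m)) (lx ly : ℝ)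
    (hlx : 0 < lx) (hly : 0 < ly) :
    ¬ ((lx ≤ inner ℝ (nsum a b) x ∧ lx ≤ inner ℝ (nsum c d) x ∧
        (inner ℝ (nsum a c) x : ℝ) < lx ∧ (inner ℝ (nsum b d) x : ℝ) < lx ∧
        (inner ℝ (nsum a d) x : ℝ) < lx ∧ (inner ℝ (nsum b c) x : ℝ) < lx) ∧
       (ly ≤ inner ℝ (nsum a c) y ∧ ly ≤ inner ℝ (nsum b d) y ∧
        ly ≤ inner ℝ (nsum a d) y ∧ ly ≤ inner ℝ (nsum b c) y ∧
        (inner ℝ (nsum a b) y : ℝ) < ly ∧ (inner ℝ (nsum c d) y : ℝ) < ly)) := by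
  rintro ⟨⟨xab, xcd, xac, xbd, -, -⟩, ⟨yac, ybd, -, -, yab, ycd⟩⟩
  have hsplit : (a + b) + (c + d) = (a + c) + (b + d) := by abel
  have hx := norm_add_norm_lt_of_add_eq hlx hsplit
    (mul_norm_le_inner_of_le_inner_nsum xab) (mul_norm_le_inner_of_le_inner_nsum xcd)
    (inner_lt_mul_norm_of_inner_nsum_lt (add_ne_zero_of_le_inner_nsum hly yac) xac)
    (inner_lt_mul_norm_of_inner_nsum_lt (add_ne_zero_of_le_inner_nsum hly ybd) xbd)
  have hy := norm_add_norm_lt_of_add_eq hly hsplit.symm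
    (mul_norm_le_inner_of_le_inner_nsum yac) (mul_norm_le_inner_of_le_inner_nsum ybd)
    (inner_lt_mul_norm_of_inner_nsum_lt (add_ne_zero_of_le_inner_nsum hlx xab) yab)
    (inner_lt_mul_norm_of_inner_nsum_lt (add_ne_zero_of_le_inner_nsum hlx xcd) ycd)
  linarith

/-- The normalised-average embedding with dot-product labelling cannot simulate
`K = {a∧b→x, c∧d→x, a∧c→y, b∧d→y, a∧d→y, b∧c→y}`. -/
theorem stmt_4 (m : ℕ) (a b c d x y : EuclideanSpace ℝ (Fin m)) (lx ly : ℝ)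
    (ha : a ≠ 0) (hb : b ≠ 0) (hc : c ≠ 0) (hd : d ≠ 0) (hx : x ≠ 0) (hy : y ≠ 0)
    (hab : a + b ≠ 0) (hac : a + c ≠ 0) (had : a + d ≠ 0)
    (hbc : b + c ≠ 0) (hbd : b + d ≠ 0) (hcd : c + d ≠ 0)
    (hlx : 0 < lx) (hly : 0 < ly) :
    ¬ ((lx ≤ inner ℝ (nsum a b) x ∧ lx ≤ inner ℝ (nsum c d) x ∧
        (inner ℝ (nsum a c) x : ℝ) < lx ∧ (inner ℝ (nsum b d) x : ℝ) < lx ∧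
        (inner ℝ (nsum a d) x : ℝ) < lx ∧ (inner ℝ (nsum b c) x : ℝ) < lx) ∧
       (ly ≤ inner ℝ (nsum a c) y ∧ ly ≤ inner ℝ (nsum b d) y ∧
        ly ≤ inner ℝ (nsum a d) y ∧ ly ≤ inner ℝ (nsum b c) y ∧
        (inner ℝ (nsum a b) y : ℝ) < ly ∧ (inner ℝ (nsum c d) y : ℝ) < ly)) :=
  stmt_4_general m a b c d x y lx ly hlx hly
end

section
/- For every finite set A of propositional atoms and every propositional knowledge base K over A, there exist vectors (a ↦ v_a) ∈ R^{l+1} (where l = |mod(K)|) such that for all nonempty {a₁,…,aₙ} ⊆ A and all b ∈ A: ReLU((v_{a₁}+…+v_{aₙ})/n) · v_b ≥ 0 if and only if K ⊨ a₁∧…∧aₙ → b. -/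
/-!
Enumerate the models `ω₁, …, ω_l` of `K` and let coordinate `i` of `v_a` be `1` if `ωᵢ ⊨ a`
and `-δ` otherwise, with a last coordinate equal to `1`. For a nonempty premise set `S`, the
`i`-th coordinate of the average `(1/|S|) ∑_{a ∈ S} v_a` is `1` when `ωᵢ ⊨ S` and nonpositive
otherwise (one `-δ` outweighs at most `|S| - 1` ones), so after ReLU it is the indicator of
`ωᵢ ⊨ S`. The score against `v_b` is therefore `1 + ∑_{ωᵢ ⊨ S} v_b(i)`, which is at least `1`
if every such model satisfies `b`, and at most `l - δ < 0` as soon as one of them does not.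
Any `δ > max l (|S| - 1)` works; the paper's `δ > 2^|A|` is one such choice.
-/
/-- Propositional formulas over a set of atoms `A`. -/
inductive PropForm (A : Type) : Type
  | atom : A → PropForm A
  | fals : PropForm A
  | impl : PropForm A → PropForm A → PropForm A

/-- Truth value of a formula under an interpretation `ω`. -/
def PropForm.eval {A : Type} (ω : A → Bool) : PropForm A → Bool
  | .atom a => ω a
  | .fals => false
  | .impl φ ψ => !(φ.eval ω) || ψ.eval ω

/-- The set `mod(K)` of models of a propositional knowledge base `K`. -/
def models {A : Type} [Fintype A] [DecidableEq A] (K : Finset (PropForm A)) :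
    Finset (A → Bool) :=
  Finset.univ.filter (fun ω => ∀ φ ∈ K, φ.eval ω = true)

/-- `K ⊨ a₁ ∧ ... ∧ aₙ → b`, where the `aᵢ` are the elements of `S`. -/
def entails {A : Type} [Fintype A] [DecidableEq A] (K : Finset (PropForm A))
    (S : Finset A) (b : A) : Prop :=
  ∀ ω ∈ models K, (∀ a ∈ S, ω a = true) → ω b = true

open Finset

theorem Finset.sum_add_one_le_add_card {ι : Type*} {s : Finset ι} {f : ι → ℝ} {j : ι}
    (hj : j ∈ s) (hf : ∀ i ∈ s, f i ≤ 1) : ∑ i ∈ s, f i + 1 ≤ f j + s.card := by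
  classical
  have hrest : ∑ i ∈ s.erase j, f i ≤ (s.erase j).card • (1 : ℝ) :=
    sum_le_card_nsmul _ _ _ fun i hi => hf i (mem_of_mem_erase hi)
  rw [← add_sum_erase s f hj, ← card_erase_add_one hj]
  push_cast
  simp only [nsmul_eq_mul, mul_one] at hrest
  linarith

section Embedding

variable {A : Type} (δ : ℝ)

def truthWeight (ω : A → Bool) (a : A) : ℝ := if ω a then 1 else -δ

noncomputable def atomEmbedding (M : Finset (A → Bool)) (a : A) :
    Fin (M.card + 1) → ℝ :=
  Fin.snoc (fun i => truthWeight δ (M.equivFin.symm i) a) 1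

variable {δ}

theorem truthWeight_le_one (hδ : 0 ≤ δ) (ω : A → Bool) (a : A) : truthWeight δ ω a ≤ 1 := by
  unfold truthWeight
  split_ifs <;> linarith

theorem truthWeight_of_false {ω : A → Bool} {a : A} (h : ω a = false) :
    truthWeight δ ω a = -δ := by
  simp [truthWeight, h]

theorem relu_avg_truthWeight {S : Finset A} (hS : S.Nonempty) (hδ : (S.card : ℝ) ≤ δ + 1)
    (ω : A → Bool) :
    max ((S.card : ℝ)⁻¹ * ∑ a ∈ S, truthWeight δ ω a) 0 =
      if ∀ a ∈ S, ω a = true then 1 else 0 := by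
  have hcard : (1 : ℝ) ≤ S.card := by exact_mod_cast hS.card_pos
  split_ifs with hsat
  · have hsum : ∑ a ∈ S, truthWeight δ ω a = S.card := by
      have hone : ∀ a ∈ S, truthWeight δ ω a = 1 := fun a ha => by simp [truthWeight, hsat a ha]
      simp [sum_congr rfl hone]
    rw [hsum, inv_mul_cancel₀ (by positivity), max_eq_left zero_le_one]
  · obtain ⟨a₀, ha₀, hfalse⟩ : ∃ a ∈ S, ω a = false := by simpa using hsat
    have hδ0 : 0 ≤ δ := by linarith
    have hsum := sum_add_one_le_add_card ha₀ fun a _ => truthWeight_le_one hδ0 ω a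
    rw [truthWeight_of_false hfalse] at hsum
    exact max_eq_right (mul_nonpos_of_nonneg_of_nonpos (by positivity) (by linarith))

theorem sum_relu_avg_mul_atomEmbedding (M : Finset (A → Bool)) {S : Finset A}
    (hS : S.Nonempty) (hδ : (S.card : ℝ) ≤ δ + 1) (b : A) :
    ∑ i, max ((S.card : ℝ)⁻¹ * ∑ a ∈ S, atomEmbedding δ M a i) 0 * atomEmbedding δ M b i =
      ∑ ω ∈ M with ∀ a ∈ S, ω a = true, truthWeight δ ω b + 1 := by
  have hcard : (S.card : ℝ) ≠ 0 := by exact_mod_cast hS.card_pos.ne'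
  simp only [Fin.sum_univ_castSucc, atomEmbedding, Fin.snoc_castSucc, Fin.snoc_last,
    relu_avg_truthWeight hS hδ, sum_const, nsmul_eq_mul, mul_one, inv_mul_cancel₀ hcard,
    max_eq_left zero_le_one, ite_mul, one_mul, zero_mul]
  rw [sum_filter, ← sum_coe_sort M]
  exact congrArg (· + 1) (M.equivFin.symm.sum_comp fun ω =>
    if ∀ a ∈ S, (ω : A → Bool) a = true then truthWeight δ ω b else 0)

theorem sum_truthWeight_add_one_nonneg_iff {T : Finset (A → Bool)} (hT : (T.card : ℝ) < δ)
    (b : A) : 0 ≤ ∑ ω ∈ T, truthWeight δ ω b + 1 ↔ ∀ ω ∈ T, ω b = true := by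
  constructor
  · intro hnonneg
    by_contra! hsome
    obtain ⟨ω, hω, hfalse⟩ : ∃ ω ∈ T, ω b = false := by simpa using hsome
    have hδ : 0 ≤ δ := (Nat.cast_nonneg _).trans hT.le
    have hsum := sum_add_one_le_add_card hω fun ω' _ => truthWeight_le_one hδ ω' b
    rw [truthWeight_of_false hfalse] at hsum
    linarith
  · intro hsat
    have hsum : 0 ≤ ∑ ω ∈ T, truthWeight δ ω b :=
      sum_nonneg fun ω hω => by simp [truthWeight, hsat ω hω]
    linarith

theorem atomEmbedding_score_nonneg_iff {M : Finset (A → Bool)} (hM : (M.card : ℝ) < δ)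
    {S : Finset A} (hS : S.Nonempty) (hS_le : (S.card : ℝ) ≤ δ + 1) (b : A) :
    0 ≤ ∑ i, max ((S.card : ℝ)⁻¹ * ∑ a ∈ S, atomEmbedding δ M a i) 0 *
        atomEmbedding δ M b i ↔ ∀ ω ∈ M, (∀ a ∈ S, ω a = true) → ω b = true := by
  rw [sum_relu_avg_mul_atomEmbedding M hS hS_le, sum_truthWeight_add_one_nonneg_iff
    ((Nat.cast_le.mpr (card_filter_le _ _)).trans_lt hM)]
  simp only [mem_filter, and_imp]

end Embedding

/-- For every propositional knowledge base `K` over a finite atom set `A`, there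
exist attribute vectors in `ℝ^{l+1}` (`l = |mod(K)|`) such that the ReLU-based
labelling of the average embedding captures exactly the rules entailed by `K`. -/
theorem stmt_6 {A : Type} [Fintype A] [DecidableEq A] (K : Finset (PropForm A)) :
    ∃ v : A → Fin ((models K).card + 1) → ℝ,
      ∀ S : Finset A, S.Nonempty → ∀ b : A,
        (0 ≤ ∑ i, max ((S.card : ℝ)⁻¹ * ∑ a ∈ S, v a i) 0 * v b i) ↔
          entails K S b := by
  have hmodels : (models K).card ≤ 2 ^ Fintype.card A := by
    simpa using (models K).card_le_univ
  refine ⟨atomEmbedding (2 ^ Fintype.card A + 1) (models K), fun S hS b => ?_⟩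
  have hS_le : S.card ≤ 2 ^ Fintype.card A := S.card_le_univ.trans Nat.lt_two_pow_self.le
  refine atomEmbedding_score_nonneg_iff ?_ hS ?_ b
  · exact_mod_cast Nat.lt_succ_of_le hmodels
  · exact_mod_cast hS_le.trans (Nat.le_add_right _ 2)
end

section
/- Fix a propositional knowledge base K with models ω₁,…,ω_l over atoms A, and δ > 2^{|A|}. Define v_a ∈ R^{l+1} by (v_a)ᵢ = 1 if ωᵢ ⊨ a, (v_a)ᵢ = −δ otherwise (i ≤ l), and (v_a)_{l+1} = 1. Then for any atoms a₁,…,aₙ, the vector e = (v_{a₁}+…+v_{aₙ})/n satisfies: eᵢ = 1 if ωᵢ ⊨ {a₁,…,aₙ} and eᵢ < 0 otherwise (for i ≤ l). -/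
open Finset

theorem card_lt_two_pow_card {α : Type*} [Fintype α] (S : Finset α) :
    #S < 2 ^ Fintype.card α :=
  (card_le_univ S).trans_lt Nat.lt_two_pow_self

theorem inv_card_mul_sum_eq_one {ι : Type*} {S : Finset ι} (hS : S.Nonempty) {f : ι → ℝ}
    (hf : ∀ a ∈ S, f a = 1) : (#S : ℝ)⁻¹ * ∑ a ∈ S, f a = 1 := by
  rw [sum_congr rfl hf, sum_const, nsmul_one]
  exact inv_mul_cancel₀ (by exact_mod_cast hS.card_pos.ne')

theorem inv_card_mul_sum_neg {ι : Type*} [DecidableEq ι] {S : Finset ι} {f : ι → ℝ} {δ : ℝ}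
    (hf : ∀ a ∈ S, f a ≤ 1) {a₀ : ι} (ha₀ : a₀ ∈ S) (hfa₀ : f a₀ = -δ)
    (hδ : (#S : ℝ) - 1 < δ) : (#S : ℝ)⁻¹ * ∑ a ∈ S, f a < 0 := by
  have hrest : ∑ a ∈ S.erase a₀, f a ≤ #S - 1 := by
    calc ∑ a ∈ S.erase a₀, f a ≤ #(S.erase a₀) • (1 : ℝ) :=
          sum_le_card_nsmul _ _ _ fun a ha => hf a (mem_of_mem_erase ha)
      _ = #S - 1 := by
          rw [nsmul_one, card_erase_of_mem ha₀, Nat.cast_sub (card_pos.mpr ⟨a₀, ha₀⟩)]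
          simp
  have hsum : ∑ a ∈ S, f a < 0 := by
    rw [← add_sum_erase S f ha₀, hfa₀]
    linarith
  have hcard : (0 : ℝ) < #S := by exact_mod_cast card_pos.mpr ⟨a₀, ha₀⟩
  exact mul_neg_of_pos_of_neg (inv_pos.mpr hcard) hsum

/-- Key lemma of the ReLU-based simulation: with `(v_a)ᵢ = 1` if `ωᵢ ⊨ a`, `-δ`
otherwise (`δ > 2^{|A|}`), and last coordinate `1`, the average
`e = (v_{a₁}+...+v_{aₙ})/n` satisfies `eᵢ = 1` if `ωᵢ ⊨ {a₁,...,aₙ}` and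
`eᵢ < 0` otherwise. -/
theorem stmt_7 {A : Type} [Fintype A] [DecidableEq A] (K : Finset (PropForm A))
    (δ : ℝ) (hδ : (2:ℝ) ^ (Fintype.card A) < δ)
    (ms : Fin (models K).card ≃ {ω : A → Bool // ω ∈ models K})
    (v : A → Fin ((models K).card + 1) → ℝ)
    (hv : ∀ a (i : Fin ((models K).card + 1)),
      v a i = if h : (i : ℕ) < (models K).card
        then (if (ms ⟨i, h⟩).1 a then 1 else -δ) else 1)
    (S : Finset A) (hS : S.Nonempty) :
    ∀ (i : Fin ((models K).card + 1)) (h : (i : ℕ) < (models K).card),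
      ((∀ a ∈ S, (ms ⟨i, h⟩).1 a = true) →
          (S.card : ℝ)⁻¹ * ∑ a ∈ S, v a i = 1) ∧
      ((¬ ∀ a ∈ S, (ms ⟨i, h⟩).1 a = true) →
          (S.card : ℝ)⁻¹ * ∑ a ∈ S, v a i < 0) := by
  intro i h
  set ω := (ms ⟨i, h⟩).1
  have hvi : ∀ a, v a i = if ω a then 1 else -δ := fun a => by rw [hv, dif_pos h]
  have hδ_pos : 0 < δ := lt_trans (by positivity) hδ
  refine ⟨fun hall => inv_card_mul_sum_eq_one hS fun a ha => by simp [hvi, hall a ha],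
    fun hnot => ?_⟩
  obtain ⟨a₀, ha₀, hωa₀⟩ := not_forall₂.mp hnot
  have hcard : (#S : ℝ) < 2 ^ Fintype.card A := by exact_mod_cast card_lt_two_pow_card S
  refine inv_card_mul_sum_neg (fun a _ => ?_) ha₀ ((hvi a₀).trans (if_neg hωa₀)) (by linarith)
  rw [hvi]
  split_ifs <;> linarith
end

section
/- For every finite set A of propositional atoms and every propositional knowledge base K over A, there exist two families of vectors (a ↦ v_a) and (a ↦ w_a) in R^{l+1} (where l = |mod(K)|) such that for all nonempty {a₁,…,aₙ} ⊆ A and all b ∈ A: (v_{a₁} ⊙ … ⊙ v_{aₙ}) · w_b ≥ 0 if and only if K ⊨ a₁∧…∧aₙ → b, where ⊙ is the componentwise (Hadamard) product. -/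
open Finset

theorem sum_add_one_nonneg_iff {ι : Type*} [Fintype ι] {t : ι → ℝ} {δ : ℝ}
    (hδ : Fintype.card ι < δ) (hle : ∀ i, t i ≤ 1) (hgap : ∀ i, 0 ≤ t i ∨ t i ≤ -δ) :
    0 ≤ ∑ i, t i + 1 ↔ ∀ i, 0 ≤ t i := by
  constructor
  · intro hsum
    by_contra! ⟨i₀, hi₀⟩
    have hdefect : 1 - t i₀ ≤ ∑ i, (1 - t i) :=
      single_le_sum (f := fun i => 1 - t i) (fun i _ => by linarith [hle i]) (mem_univ i₀)
    rw [sum_sub_distrib, sum_const, card_univ, nsmul_one] at hdefect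
    linarith [(hgap i₀).resolve_left (not_le.2 hi₀)]
  · intro hnonneg
    linarith [sum_nonneg fun i (_ : i ∈ univ) => hnonneg i]

section Embedding

variable {A : Type*} {n : ℕ}

noncomputable def premiseVector (e : Fin n → A → Bool) (a : A) : Fin (n + 1) → ℝ :=
  Fin.snoc (fun i => if e i a then 1 else 0) 1

noncomputable def conclusionVector (δ : ℝ) (e : Fin n → A → Bool) (b : A) : Fin (n + 1) → ℝ :=
  Fin.snoc (fun i => if e i b then 1 else -δ) 1

theorem hadamard_dot_conclusionVector (e : Fin n → A → Bool) (δ : ℝ) (S : Finset A) (b : A) :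
    ∑ i, (∏ a ∈ S, premiseVector e a i) * conclusionVector δ e b i =
      ∑ i : Fin n, (if ∀ a ∈ S, e i a = true then (if e i b then 1 else -δ) else 0) + 1 := by
  simp only [Fin.sum_univ_castSucc, premiseVector, conclusionVector, Fin.snoc_castSucc,
    Fin.snoc_last, prod_const_one, one_mul, prod_ite_zero, ite_mul, zero_mul]

theorem hadamard_dot_conclusionVector_nonneg_iff (e : Fin n → A → Bool) {δ : ℝ} (hδ : n < δ)
    (S : Finset A) (b : A) :
    0 ≤ ∑ i, (∏ a ∈ S, premiseVector e a i) * conclusionVector δ e b i ↔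
      ∀ i, (∀ a ∈ S, e i a = true) → e i b = true := by
  have hδ_pos : 0 < δ := lt_of_le_of_lt n.cast_nonneg hδ
  rw [hadamard_dot_conclusionVector, sum_add_one_nonneg_iff (by simpa using hδ)]
  · refine forall_congr' fun i => ?_
    split_ifs with hS hb
    · exact iff_of_true zero_le_one fun _ => hb
    · exact iff_of_false (by linarith) fun h => hb (h hS)
    · exact iff_of_true le_rfl fun h => absurd h hS
  · intro i
    split_ifs <;> linarith
  · intro i
    split_ifs <;> simp

end Embedding

theorem entails_iff_forall_equivFin {A : Type} [Fintype A] [DecidableEq A]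
    (K : Finset (PropForm A)) (S : Finset A) (b : A) :
    entails K S b ↔ ∀ i, (∀ a ∈ S, ((models K).equivFin.symm i : A → Bool) a = true) →
      ((models K).equivFin.symm i : A → Bool) b = true := by
  unfold entails
  exact Subtype.forall.symm.trans <| (models K).equivFin.forall_congr_left
    (p := fun ω : models K => (∀ a ∈ S, (ω : A → Bool) a = true) → (ω : A → Bool) b = true)

/-- Hadamard-product embeddings with dot-product labelling can simulate any
propositional knowledge base `K`: there exist two families of vectors in
`ℝ^{l+1}` (`l = |mod(K)|`) such that `(v_{a₁} ⊙ ... ⊙ v_{aₙ}) · w_b ≥ 0` iff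
`K ⊨ a₁∧...∧aₙ → b`. -/
theorem stmt_8 {A : Type} [Fintype A] [DecidableEq A] (K : Finset (PropForm A)) :
    ∃ (v w : A → Fin ((models K).card + 1) → ℝ),
      ∀ S : Finset A, S.Nonempty → ∀ b : A,
        (0 ≤ ∑ i, (∏ a ∈ S, v a i) * w b i) ↔ entails K S b := by
  let e : Fin (models K).card → A → Bool := fun i => (models K).equivFin.symm i
  refine ⟨premiseVector e, conclusionVector ((models K).card + 1) e, fun S _ b => ?_⟩
  rw [hadamard_dot_conclusionVector_nonneg_iff e (by linarith), entails_iff_forall_equivFin]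
end

section
/- With the order-embedding construction (v_a)ᵢ = 0 if ωᵢ ⊨ a else 1, one has v_b ⪯ max(v_{a₁},…,v_{aₙ}) if and only if every model ωᵢ of K satisfying {a₁,…,aₙ} also satisfies b. -/
section TwoValued

variable {ι α : Type*} [LinearOrder α] {lo hi : α}

lemma ite_le_ite_iff (h : lo < hi) (p q : Bool) :
    (if q then lo else hi) ≤ (if p then lo else hi) ↔ (p = true → q = true) := by
  cases p <;> cases q <;> simp [h.le, h.not_ge]

lemma ite_le_sup'_ite_iff (h : lo < hi) (S : Finset ι) (hS : S.Nonempty) (p : ι → Bool)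
    (q : Bool) :
    (if q then lo else hi) ≤ S.sup' hS (fun a => if p a then lo else hi) ↔
      ((∀ a ∈ S, p a = true) → q = true) := by
  simp only [Finset.le_sup'_iff, ite_le_ite_iff h]
  cases q <;> simp [hS.exists_mem]

end TwoValued

/-- Core equivalence of the order-embedding construction: with `(v_a)ᵢ = 0` if
`ωᵢ ⊨ a` and `1` otherwise, `v_b ⪯ max(v_{a₁},...,v_{aₙ})` iff every model `ωᵢ`
of `K` satisfying `{a₁,...,aₙ}` also satisfies `b`. -/
theorem stmt_11 {A : Type} [Fintype A] [DecidableEq A] (K : Finset (PropForm A))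
    (ms : Fin (models K).card ≃ {ω : A → Bool // ω ∈ models K})
    (v : A → Fin ((models K).card) → ℝ)
    (hv : ∀ a i, v a i = if (ms i).1 a then 0 else 1)
    (S : Finset A) (hS : S.Nonempty) (b : A) :
    (∀ i, v b i ≤ S.sup' hS (fun a => v a i)) ↔
      (∀ i, (∀ a ∈ S, (ms i).1 a = true) → (ms i).1 b = true) := by
  simp only [hv]
  exact forall_congr' fun i => ite_le_sup'_ite_iff zero_lt_one S hS _ _
end

section
/- For every stratified knowledge base Θ = (α₁,…,α_k) over a finite atom set A, there exist vectors (a ↦ v_a) ∈ R^l (l = number of all interpretations over A) such that for all nonempty {a₁,…,aₙ} ⊆ A and all b ∈ A: ReLU((v_{a₁}+…+v_{aₙ})/n) · v_b ≥ 0 if and only if Θ ⊨ a₁∧…∧aₙ ▷ b. -/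
/-- Ranked (default) entailment `Θ ⊨ a₁∧...∧aₙ ▷ b` for a stratified knowledge
base `Θ = (α₁,...,α_k)`: for some `i`, `α₁∧...∧αᵢ∧a₁∧...∧aₙ ⊨ b` and
`α₁∧...∧αᵢ∧a₁∧...∧aₙ ⊭ ¬b`. -/
def rankedEntails {A : Type} (Θ : List (PropForm A)) (S : Finset A) (b : A) : Prop :=
  ∃ i : ℕ,
    (∀ ω : A → Bool, (∀ φ ∈ Θ.take i, φ.eval ω = true) →
        (∀ a ∈ S, ω a = true) → ω b = true) ∧
    (∃ ω : A → Bool, (∀ φ ∈ Θ.take i, φ.eval ω = true) ∧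
        (∀ a ∈ S, ω a = true) ∧ ω b = true)

/-!
Rank every interpretation `ω` by `μ(ω)`, the length of the longest prefix of `Θ` it satisfies;
then `Θ ⊨ a₁∧…∧aₙ ▷ b` holds iff `b` is true in every model of `a₁,…,aₙ` of maximal rank.
With `(v_a)_ω = δ^{2μ(ω)}` if `ω ⊨ a` and `-δ^{2μ(ω)+1}` otherwise, a single false `aᵢ`
outweighs all the others, so the ReLU of the average is `δ^{2μ(ω)}` on the models of `a₁,…,aₙ`
and `0` elsewhere.
The dot product with `v_b` is then a sum over these models of `δ^{4μ(ω)}` when `ω ⊨ b` and of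
`-δ^{4μ(ω)+1}` otherwise, and for `δ > 2^{|A|}` its sign is decided by the terms of maximal rank.
-/

open Finset

theorem max_inv_card_mul_sum_ite_eq {ι : Type*} {S : Finset ι} (hS : S.Nonempty)
    (p : ι → Prop) [DecidablePred p] {x y : ℝ} (hx : 0 ≤ x) (hxy : ((#S : ℝ) - 1) * x < y) :
    max ((#S : ℝ)⁻¹ * ∑ a ∈ S, if p a then x else -y) 0 = if ∀ a ∈ S, p a then x else 0 := by
  classical
  have hcard : (1 : ℝ) ≤ #S := by exact_mod_cast hS.card_pos
  split_ifs with hp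
  · rw [sum_congr rfl fun a ha => if_pos (hp a ha), sum_const, nsmul_eq_mul,
      inv_mul_cancel_left₀ (by positivity)]
    exact max_eq_left hx
  · push Not at hp
    obtain ⟨a₀, ha₀, hpa₀⟩ := hp
    have hy : 0 < y := by nlinarith
    have hrest : ∑ a ∈ S.erase a₀, (if p a then x else -y) ≤ ((#S : ℝ) - 1) * x :=
      calc ∑ a ∈ S.erase a₀, (if p a then x else -y) ≤ #(S.erase a₀) • x :=
            sum_le_card_nsmul _ _ _ fun a _ => by split_ifs <;> linarith
        _ = ((#S : ℝ) - 1) * x := by rw [nsmul_eq_mul, cast_card_erase_of_mem ha₀]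
    have hsum : ∑ a ∈ S, (if p a then x else -y) < 0 := by
      rw [← add_sum_erase _ _ ha₀, if_neg hpa₀]
      linarith
    exact max_eq_right (mul_neg_of_pos_of_neg (by positivity) hsum).le

section DominantTerm

variable {ι : Type*} {T : Finset ι} (r : ι → ℕ) (q : ι → Prop) [DecidablePred q] {β γ : ℝ}

theorem sum_ite_pow_neg_of_exists_sup (hβ : 1 ≤ β) (hγ : (#T : ℝ) - 1 < γ)
    (h : ∃ ω ∈ T, r ω = T.sup r ∧ ¬q ω) :
    ∑ ω ∈ T, (if q ω then β ^ r ω else -(γ * β ^ r ω)) < 0 := by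
  classical
  obtain ⟨ω₀, hω₀, hr, hq⟩ := h
  have hγ0 : 0 ≤ γ := by
    have : (1 : ℝ) ≤ #T := by exact_mod_cast card_pos.mpr ⟨ω₀, hω₀⟩
    linarith
  have hrest : ∑ ω ∈ T.erase ω₀, (if q ω then β ^ r ω else -(γ * β ^ r ω))
      ≤ ((#T : ℝ) - 1) * β ^ T.sup r :=
    calc _ ≤ #(T.erase ω₀) • β ^ T.sup r := by
          refine sum_le_card_nsmul _ _ _ fun ω hω => ?_
          have hle : β ^ r ω ≤ β ^ T.sup r :=
            pow_le_pow_right₀ hβ (le_sup (mem_of_mem_erase hω))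
          split_ifs
          · exact hle
          · nlinarith [pow_nonneg (zero_le_one.trans hβ) (r ω)]
      _ = ((#T : ℝ) - 1) * β ^ T.sup r := by rw [nsmul_eq_mul, cast_card_erase_of_mem hω₀]
  rw [← add_sum_erase _ _ hω₀, if_neg hq, hr]
  nlinarith [pow_pos (zero_lt_one.trans_le hβ) (T.sup r)]

theorem sum_ite_pow_pos_of_forall_sup (hβ : 1 ≤ β) (hγ : 0 ≤ γ) (hγβ : ((#T : ℝ) - 1) * γ < β)
    (hT : T.Nonempty) (h : ∀ ω ∈ T, r ω = T.sup r → q ω) :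
    0 < ∑ ω ∈ T, (if q ω then β ^ r ω else -(γ * β ^ r ω)) := by
  classical
  obtain ⟨ω₀, hω₀, hr⟩ := exists_mem_eq_sup T hT r
  have hpow : 0 < β ^ T.sup r := pow_pos (zero_lt_one.trans_le hβ) _
  -- after scaling by `β`, every term of lower rank is at least `-γ β ^ sup r`
  have hrest : -(((#T : ℝ) - 1) * (γ * β ^ T.sup r))
      ≤ β * ∑ ω ∈ T.erase ω₀, (if q ω then β ^ r ω else -(γ * β ^ r ω)) :=
    calc _ = #(T.erase ω₀) • -(γ * β ^ T.sup r) := by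
          rw [nsmul_eq_mul, cast_card_erase_of_mem hω₀, mul_neg]
      _ ≤ _ := by
          rw [mul_sum]
          refine card_nsmul_le_sum _ _ _ fun ω hω => ?_
          have hrω := le_sup (f := r) (mem_of_mem_erase hω)
          split_ifs with hq
          · nlinarith [pow_nonneg (zero_le_one.trans hβ) (r ω)]
          · have hlt : r ω + 1 ≤ T.sup r :=
              lt_of_le_of_ne hrω fun he => hq (h ω (mem_of_mem_erase hω) he)
            have := pow_le_pow_right₀ hβ hlt
            rw [pow_succ] at this
            nlinarith
  have hscaled : 0 < β * ∑ ω ∈ T, (if q ω then β ^ r ω else -(γ * β ^ r ω)) := by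
    rw [← add_sum_erase _ _ hω₀, if_pos (h ω₀ hω₀ hr.symm), ← hr, mul_add]
    nlinarith
  exact pos_of_mul_pos_right hscaled (zero_le_one.trans hβ)

theorem sum_ite_pow_nonneg_iff (hβ : 1 ≤ β) (hγ : (#T : ℝ) - 1 < γ)
    (hγβ : ((#T : ℝ) - 1) * γ < β) (hT : T.Nonempty) :
    0 ≤ ∑ ω ∈ T, (if q ω then β ^ r ω else -(γ * β ^ r ω)) ↔
      ∀ ω ∈ T, r ω = T.sup r → q ω := by
  have hγ0 : 0 ≤ γ := by
    have : (1 : ℝ) ≤ #T := by exact_mod_cast hT.card_pos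
    linarith
  refine ⟨fun hsum => ?_, fun h => (sum_ite_pow_pos_of_forall_sup r q hβ hγ0 hγβ hT h).le⟩
  by_contra! h
  exact hsum.not_gt (sum_ite_pow_neg_of_exists_sup r q hβ hγ h)

end DominantTerm

namespace KnowledgeBase

variable {A : Type}

def rank (Θ : List (PropForm A)) (ω : A → Bool) : ℕ :=
  (Θ.takeWhile (·.eval ω)).length

theorem rank_le_length (Θ : List (PropForm A)) (ω : A → Bool) : rank Θ ω ≤ Θ.length :=
  (Θ.takeWhile_prefix _).length_le

theorem forall_mem_take_eval_iff_min_le_rank (Θ : List (PropForm A)) (ω : A → Bool) (i : ℕ) :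
    (∀ φ ∈ Θ.take i, φ.eval ω = true) ↔ min i Θ.length ≤ rank Θ ω := by
  induction Θ generalizing i with
  | nil => simp [rank]
  | cons φ Θ ih =>
    cases i with
    | zero => simp
    | succ i =>
      by_cases h : φ.eval ω = true
      · simp only [rank, List.takeWhile_cons, h] at ih ⊢
        simp [h, ih, Nat.succ_min_succ]
      · simp [rank, h]

def atomModels [Fintype A] [DecidableEq A] (S : Finset A) : Finset (A → Bool) :=
  univ.filter fun ω => ∀ a ∈ S, ω a = true

theorem mem_atomModels [Fintype A] [DecidableEq A] {S : Finset A} {ω : A → Bool} :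
    ω ∈ atomModels S ↔ ∀ a ∈ S, ω a = true := by
  simp [atomModels]

theorem rankedEntails_iff_forall_rank_eq_sup [Fintype A] [DecidableEq A]
    (Θ : List (PropForm A)) (S : Finset A) (b : A) :
    rankedEntails Θ S b ↔
      ∀ ω ∈ atomModels S, rank Θ ω = (atomModels S).sup (rank Θ) → ω b = true := by
  set M := (atomModels S).sup (rank Θ)
  have hM : M ≤ Θ.length := Finset.sup_le fun ω _ => rank_le_length Θ ω
  constructor
  · rintro ⟨i, hentails, ω₁, hω₁Θ, hω₁S, -⟩ ω hωS hωM
    refine hentails ω ((forall_mem_take_eval_iff_min_le_rank Θ ω i).mpr ?_) (mem_atomModels.mp hωS)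
    calc min i Θ.length ≤ rank Θ ω₁ := (forall_mem_take_eval_iff_min_le_rank Θ ω₁ i).mp hω₁Θ
      _ ≤ M := le_sup (mem_atomModels.mpr hω₁S)
      _ = rank Θ ω := hωM.symm
  · intro h
    obtain ⟨ω₀, hω₀S, hω₀M⟩ :=
      exists_mem_eq_sup (atomModels S) ⟨fun _ => true, mem_atomModels.mpr fun _ _ => rfl⟩ (rank Θ)
    refine ⟨M, fun ω hωΘ hωS => ?_, ω₀, ?_, mem_atomModels.mp hω₀S, h ω₀ hω₀S hω₀M.symm⟩
    · have hωS' : ω ∈ atomModels S := mem_atomModels.mpr hωS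
      have hMω : M ≤ rank Θ ω := by
        simpa [min_eq_left hM] using (forall_mem_take_eval_iff_min_le_rank Θ ω M).mp hωΘ
      exact h ω hωS' (le_antisymm (le_sup hωS') hMω)
    · exact (forall_mem_take_eval_iff_min_le_rank Θ ω₀ M).mpr ((min_le_left _ _).trans hω₀M.le)

end KnowledgeBase

open KnowledgeBase in
/-- ReLU-based averaging embeddings can simulate ranked non-monotonic
entailment: vectors indexed by the `l = 2^{|A|}` interpretations over `A`
exist such that `ReLU((v_{a₁}+...+v_{aₙ})/n) · v_b ≥ 0` iff
`Θ ⊨ a₁∧...∧aₙ ▷ b`. -/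
theorem stmt_13 {A : Type} [Fintype A] [DecidableEq A] (Θ : List (PropForm A)) :
    ∃ v : A → (A → Bool) → ℝ,
      ∀ S : Finset A, S.Nonempty → ∀ b : A,
        (0 ≤ ∑ ω : A → Bool, max ((S.card : ℝ)⁻¹ * ∑ a ∈ S, v a ω) 0 * v b ω) ↔
          rankedEntails Θ S b := by
  set δ : ℝ := Fintype.card (A → Bool) + 1
  refine ⟨fun a ω => if ω a then δ ^ (2 * rank Θ ω) else -δ ^ (2 * rank Θ ω + 1),
    fun S hS b => ?_⟩
  have hδ : 1 ≤ δ := by simp [δ]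
  have hcard_lt (s : Finset (A → Bool)) : (#s : ℝ) - 1 < δ := by
    have : #s ≤ Fintype.card (A → Bool) := card_le_univ s
    simp only [δ]
    linarith [(Nat.cast_le (α := ℝ)).mpr this]
  have hS_lt : (#S : ℝ) - 1 < δ := by
    have : #S < Fintype.card (A → Bool) := by
      rw [Fintype.card_fun, Fintype.card_bool]
      exact (card_le_univ S).trans_lt Nat.lt_two_pow_self
    simp only [δ]
    linarith [(Nat.cast_lt (α := ℝ)).mpr this]
  have hterm (ω : A → Bool) :
      max ((#S : ℝ)⁻¹ * ∑ a ∈ S, if ω a then δ ^ (2 * rank Θ ω) else -δ ^ (2 * rank Θ ω + 1)) 0 *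
          (if ω b then δ ^ (2 * rank Θ ω) else -δ ^ (2 * rank Θ ω + 1)) =
        if ω ∈ atomModels S then
          (if ω b then (δ ^ 4) ^ rank Θ ω else -(δ * (δ ^ 4) ^ rank Θ ω)) else 0 := by
    rw [max_inv_card_mul_sum_ite_eq hS (fun a => ω a = true) (by positivity)]
    · simp only [mem_atomModels, ← pow_mul]
      split_ifs <;> ring
    · rw [pow_succ, mul_comm]
      exact mul_lt_mul_of_pos_left hS_lt (by positivity)
  rw [sum_congr rfl fun ω _ => hterm ω, sum_ite_mem, univ_inter,
    rankedEntails_iff_forall_rank_eq_sup]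
  refine sum_ite_pow_nonneg_iff _ _ (one_le_pow₀ hδ) (hcard_lt _) ?_
    ⟨fun _ => true, mem_atomModels.mpr fun _ _ => rfl⟩
  calc (#(atomModels S) - 1 : ℝ) * δ < δ ^ 2 := by
        rw [sq]; exact mul_lt_mul_of_pos_right (hcard_lt _) (by positivity)
    _ ≤ δ ^ 4 := pow_le_pow_right₀ hδ (by norm_num)
end

section
/- Let δ > N ≥ 1 be reals, and let (μᵢ)_{i∈I} and (νⱼ)_{j∈J} be finite families of natural numbers with |I| ≤ N, |J| ≤ N. Set m⁺ = max_i μᵢ (−∞ if I empty) and m⁻ = max_j νⱼ (−1 if J empty, with I nonempty). Then Σ_{i∈I} δ^{4μᵢ} ≥ Σ_{j∈J} δ^{1+4νⱼ} if and only if m⁺ > m⁻. -/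
/-! The two sides are compared through their dominant powers of `δ`. A sum of at most `N < δ`
powers of `δ`, all with exponent below `m`, is less than `δ ^ m`. Exponents `4μᵢ` and `1 + 4νⱼ`
never coincide, so if some `μᵢ` exceeds every `νⱼ` the whole `J`-sum stays below `δ ^ (4μᵢ)`,
and otherwise the whole `I`-sum stays below `δ ^ (1 + 4νⱼ)` for a maximal `νⱼ`. -/

open Finset

theorem Finset.sum_pow_lt_pow_of_lt {ι : Type*} (s : Finset ι) (e : ι → ℕ) {δ : ℝ} {m : ℕ}
    (hδ : 1 ≤ δ) (hcard : (#s : ℝ) < δ) (he : ∀ i ∈ s, e i < m) :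
    ∑ i ∈ s, δ ^ e i < δ ^ m := by
  cases m with
  | zero =>
    obtain rfl : s = ∅ := eq_empty_of_forall_notMem fun i hi => Nat.not_lt_zero _ (he i hi)
    simp
  | succ k =>
    calc ∑ i ∈ s, δ ^ e i
        ≤ #s • δ ^ k :=
          sum_le_card_nsmul _ _ _ fun i hi => pow_le_pow_right₀ hδ (Nat.lt_succ_iff.1 (he i hi))
      _ = #s * δ ^ k := nsmul_eq_mul _ _
      _ < δ * δ ^ k := mul_lt_mul_of_pos_right hcard (by positivity)
      _ = δ ^ (k + 1) := (pow_succ' δ k).symm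

theorem Finset.ite_sup_lt_sup_iff {ι κ : Type*} (I : Finset ι) (J : Finset κ) (μ : ι → ℕ)
    (ν : κ → ℕ) :
    (if J.Nonempty then J.sup (fun j => ((ν j : ℤ) : WithBot ℤ)) else ((-1 : ℤ) : WithBot ℤ)) <
        I.sup (fun i => ((μ i : ℤ) : WithBot ℤ)) ↔
      ∃ i ∈ I, ∀ j ∈ J, ν j < μ i := by
  rw [Finset.lt_sup_iff]
  split_ifs with hJ
  · refine exists_congr fun i => and_congr_right fun _ => ?_
    rw [Finset.sup_lt_iff (WithBot.bot_lt_coe _)]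
    simp
  · simp [not_nonempty_iff_eq_empty.1 hJ, WithBot.coe_lt_coe, show ∀ n : ℕ, (-1 : ℤ) < n by omega]

theorem sum_pow_one_add_four_mul_le_sum_pow_four_mul_iff {ι κ : Type*} (I : Finset ι)
    (J : Finset κ) (μ : ι → ℕ) (ν : κ → ℕ) {δ : ℝ} (hδ : 1 ≤ δ) (hI : (#I : ℝ) < δ)
    (hJ : (#J : ℝ) < δ) (hIJ : J = ∅ → I.Nonempty) :
    (∑ j ∈ J, δ ^ (1 + 4 * ν j) ≤ ∑ i ∈ I, δ ^ (4 * μ i)) ↔ ∃ i ∈ I, ∀ j ∈ J, ν j < μ i := by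
  have hpos : ∀ n : ℕ, 0 ≤ δ ^ n := fun n => by positivity
  constructor
  · contrapose!
    intro hdom
    obtain ⟨j₀, hj₀, hj₀max⟩ : ∃ j₀ ∈ J, ∀ j ∈ J, ν j ≤ ν j₀ := by
      refine J.exists_max_image ν (nonempty_iff_ne_empty.2 fun hJe => ?_)
      obtain ⟨i, hi⟩ := hIJ hJe
      obtain ⟨j, hj, -⟩ := hdom i hi
      simp [hJe] at hj
    calc ∑ i ∈ I, δ ^ (4 * μ i)
        < δ ^ (1 + 4 * ν j₀) := I.sum_pow_lt_pow_of_lt _ hδ hI fun i hi => by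
          obtain ⟨j, hj, hle⟩ := hdom i hi
          have := hj₀max j hj
          omega
      _ ≤ ∑ j ∈ J, δ ^ (1 + 4 * ν j) :=
          single_le_sum (f := fun j => δ ^ (1 + 4 * ν j)) (fun j _ => hpos _) hj₀
  · rintro ⟨i₀, hi₀, hlt⟩
    calc ∑ j ∈ J, δ ^ (1 + 4 * ν j)
        ≤ δ ^ (4 * μ i₀) := (J.sum_pow_lt_pow_of_lt _ hδ hJ fun j hj => by
          have := hlt j hj
          omega).le
      _ ≤ ∑ i ∈ I, δ ^ (4 * μ i) :=
          single_le_sum (f := fun i => δ ^ (4 * μ i)) (fun i _ => hpos _) hi₀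

/-- Arithmetic lemma for the ReLU-based simulation of ranked entailment:
with `δ > N ≥ 1`, `|I|, |J| ≤ N`, and (`m⁻ = -1` when `J` is empty, `I` then
being nonempty; `m⁺ = -∞` when `I` is empty),
`Σ_{i∈I} δ^{4μᵢ} ≥ Σ_{j∈J} δ^{1+4νⱼ}` iff `m⁺ > m⁻`. -/
theorem stmt_14 {ι κ : Type*} (I : Finset ι) (J : Finset κ) (μ : ι → ℕ) (ν : κ → ℕ)
    (δ N : ℝ) (hN : 1 ≤ N) (hδ : N < δ)
    (hI : (I.card : ℝ) ≤ N) (hJ : (J.card : ℝ) ≤ N)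
    (hIJ : J = ∅ → I.Nonempty) :
    (∑ j ∈ J, δ ^ (1 + 4 * ν j) ≤ ∑ i ∈ I, δ ^ (4 * μ i)) ↔
      (if J.Nonempty then J.sup (fun j => ((ν j : ℤ) : WithBot ℤ))
        else ((-1 : ℤ) : WithBot ℤ)) <
      I.sup (fun i => ((μ i : ℤ) : WithBot ℤ)) := by
  rw [ite_sup_lt_sup_iff]
  exact sum_pow_one_add_four_mul_le_sum_pow_four_mul_iff I J μ ν (hN.trans hδ.le)
    (hI.trans_lt hδ) (hJ.trans_lt hδ) hIJ
end

section
/- For every stratified knowledge base Θ = (α₁,…,α_k) over a finite atom set A, there exist two families of vectors (a ↦ v_a) and (a ↦ w_a) in R^l (l = number of interpretations over A) such that for all nonempty {a₁,…,aₙ} ⊆ A and all b ∈ A: (v_{a₁} ⊙ … ⊙ v_{aₙ}) · w_b ≥ 0 if and only if Θ ⊨ a₁∧…∧aₙ ▷ b. -/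
namespace RankedEntailment

open Finset

section Rank

variable {A : Type}

def rank (Θ : List (PropForm A)) (ω : A → Bool) : ℕ :=
  Nat.findGreatest (fun i => ∀ φ ∈ Θ.take i, φ.eval ω = true) Θ.length

theorem rank_le_length (Θ : List (PropForm A)) (ω : A → Bool) : rank Θ ω ≤ Θ.length :=
  Nat.findGreatest_le _

theorem le_rank_iff {Θ : List (PropForm A)} {ω : A → Bool} {i : ℕ} (hi : i ≤ Θ.length) :
    i ≤ rank Θ ω ↔ ∀ φ ∈ Θ.take i, φ.eval ω = true := by
  let P i := ∀ φ ∈ Θ.take i, φ.eval ω = true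
  refine ⟨fun h φ hφ => ?_, Nat.le_findGreatest (P := P) hi⟩
  have hrank : P (rank Θ ω) := Nat.findGreatest_spec (P := P) (Nat.zero_le _) (by simp [P])
  exact hrank φ (List.take_subset_take_left Θ h hφ)

end Rank

theorem exists_threshold_iff_lt_sup {α : Type*} {f : α → ℕ} {s t : Finset α} {n : ℕ}
    (hs : s.Nonempty) (hf : ∀ x ∈ s, f x ≤ n) :
    (∃ k ≤ n, (∀ x ∈ t, f x < k) ∧ ∃ y ∈ s, k ≤ f y) ↔ ∀ x ∈ t, f x < s.sup f := by
  constructor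
  · rintro ⟨k, -, hlt, y, hy, hle⟩ x hx
    exact (hlt x hx).trans_le (hle.trans (le_sup hy))
  · intro hlt
    obtain ⟨y, hy, hsup⟩ := exists_mem_eq_sup s hs f
    exact ⟨s.sup f, Finset.sup_le hf, hlt, y, hy, hsup.le⟩

theorem sum_pow_lt_pow {α : Type*} {d : ℝ} (hd : 1 ≤ d) {s : Finset α} (hs : (#s : ℝ) < d)
    {e : α → ℕ} {n : ℕ} (he : ∀ x ∈ s, e x < n) : ∑ x ∈ s, d ^ e x < d ^ n := by
  rcases n with _ | n
  · obtain rfl : s = ∅ := eq_empty_of_forall_notMem fun x hx => Nat.not_lt_zero _ (he x hx)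
    simp
  calc ∑ x ∈ s, d ^ e x ≤ #s * d ^ n := by
        simpa using sum_le_card_nsmul s _ _ fun x hx =>
          pow_le_pow_right₀ hd (Nat.le_of_lt_succ (he x hx))
    _ < d * d ^ n := by gcongr
    _ = d ^ (n + 1) := (pow_succ' d n).symm

theorem sum_pow_odd_le_sum_pow_even_iff {α : Type*} (μ : α → ℕ) {d : ℝ} {s t : Finset α}
    (hs : s.Nonempty) (hscard : (#s : ℝ) < d) (htcard : (#t : ℝ) < d) :
    ∑ x ∈ t, d ^ (2 * μ x + 1) ≤ ∑ x ∈ s, d ^ (2 * μ x) ↔ ∀ x ∈ t, μ x < s.sup μ := by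
  have hd : 1 ≤ d := le_of_lt (lt_of_le_of_lt (by exact_mod_cast hs.card_pos) hscard)
  have single_le {u : Finset α} {e : α → ℕ} {x : α} (hx : x ∈ u) : d ^ e x ≤ ∑ y ∈ u, d ^ e y :=
    single_le_sum (f := fun y => d ^ e y) (fun _ _ => by positivity) hx
  constructor
  · intro hle x hx
    by_contra! hge
    have hlt : ∑ y ∈ s, d ^ (2 * μ y) < d ^ (2 * μ x + 1) :=
      sum_pow_lt_pow hd hscard fun y hy => by have := le_sup (f := μ) hy; omega
    linarith [single_le (e := fun y => 2 * μ y + 1) hx]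
  · intro hlt
    obtain ⟨y, hy, hsup⟩ := exists_mem_eq_sup s hs μ
    calc ∑ x ∈ t, d ^ (2 * μ x + 1) ≤ d ^ (2 * μ y) :=
          (sum_pow_lt_pow hd htcard fun x hx => by have := hlt x hx; omega).le
      _ ≤ ∑ x ∈ s, d ^ (2 * μ x) := single_le (e := fun x => 2 * μ x) hy

section Embedding

variable {A : Type} [Fintype A] [DecidableEq A]

def premiseModels (S : Finset A) : Finset (A → Bool) :=
  univ.filter fun ω => ∀ a ∈ S, ω a = true

def atomIndicator (a : A) (ω : A → Bool) : ℝ :=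
  if ω a then 1 else 0

def rankWeight (μ : (A → Bool) → ℕ) (d : ℝ) (b : A) (ω : A → Bool) : ℝ :=
  if ω b then d ^ (2 * μ ω) else -d ^ (2 * μ ω + 1)

theorem sum_prod_atomIndicator_mul_rankWeight (μ : (A → Bool) → ℕ) (d : ℝ) (S : Finset A)
    (b : A) :
    ∑ ω, (∏ a ∈ S, atomIndicator a ω) * rankWeight μ d b ω =
      ∑ ω ∈ (premiseModels S).filter (fun ω => ω b = true), d ^ (2 * μ ω) -
        ∑ ω ∈ (premiseModels S).filter (fun ω => ¬ω b = true), d ^ (2 * μ ω + 1) := by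
  simp only [atomIndicator, prod_boole, ite_mul, one_mul, zero_mul]
  rw [← sum_filter, ← premiseModels]
  simp only [rankWeight]
  rw [sum_ite, sum_neg_distrib, sub_eq_add_neg]

theorem rankedEntails_iff_rank_lt_sup (Θ : List (PropForm A)) (S : Finset A) (b : A) :
    rankedEntails Θ S b ↔
      ∀ ω ∈ (premiseModels S).filter (fun ω => ¬ω b = true),
        rank Θ ω < ((premiseModels S).filter (fun ω => ω b = true)).sup (rank Θ) := by
  rw [← exists_threshold_iff_lt_sup (n := Θ.length) ⟨fun _ => true, by simp [premiseModels]⟩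
    fun ω _ => rank_le_length Θ ω]
  simp only [premiseModels, mem_filter, mem_univ, true_and]
  constructor
  · rintro ⟨i, hentails, ω, hsat, hS, hb⟩
    have hsat_min : ∀ {ω : A → Bool}, (∀ φ ∈ Θ.take i, φ.eval ω = true) ↔
        min i Θ.length ≤ rank Θ ω := by
      rw [List.take_eq_take_min]; exact (le_rank_iff (min_le_right _ _)).symm
    refine ⟨min i Θ.length, min_le_right _ _, fun ω' ⟨hS', hb'⟩ => ?_, ω, ⟨hS, hb⟩,
      hsat_min.1 hsat⟩
    by_contra! hge
    exact hb' (hentails ω' (hsat_min.2 hge) hS')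
  · rintro ⟨k, hk, hbelow, ω, ⟨hS, hb⟩, hkω⟩
    refine ⟨k, fun ω' hsat hS' => ?_, ω, (le_rank_iff hk).1 hkω, hS, hb⟩
    by_contra hb'
    exact (hbelow ω' ⟨hS', hb'⟩).not_ge ((le_rank_iff hk).2 hsat)

end Embedding

end RankedEntailment

/-- Hadamard-product embeddings can simulate ranked non-monotonic entailment:
two families of vectors indexed by the `l = 2^{|A|}` interpretations over `A`
exist such that `(v_{a₁} ⊙ ... ⊙ v_{aₙ}) · w_b ≥ 0` iff `Θ ⊨ a₁∧...∧aₙ ▷ b`. -/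
theorem stmt_15 {A : Type} [Fintype A] [DecidableEq A] (Θ : List (PropForm A)) :
    ∃ (v w : A → (A → Bool) → ℝ),
      ∀ S : Finset A, S.Nonempty → ∀ b : A,
        (0 ≤ ∑ ω : A → Bool, (∏ a ∈ S, v a ω) * w b ω) ↔
          rankedEntails Θ S b := by
  open RankedEntailment in
  set d : ℝ := Fintype.card (A → Bool) + 1
  have hcard (T : Finset (A → Bool)) : (T.card : ℝ) < d := by
    simp only [d]; exact_mod_cast Nat.lt_succ_of_le (Finset.card_le_univ T)
  refine ⟨atomIndicator, rankWeight (rank Θ) d, fun S _ b => ?_⟩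
  have hmodel : (fun _ => true) ∈ (premiseModels S).filter (fun ω => ω b = true) := by
    simp [premiseModels]
  rw [sum_prod_atomIndicator_mul_rankWeight, sub_nonneg,
    sum_pow_odd_le_sum_pow_even_iff _ ⟨_, hmodel⟩ (hcard _) (hcard _),
    rankedEntails_iff_rank_lt_sup]
end
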